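/- arXiv:2301.01572 — 2 statements merged into one kernel-verified Lean document; each statement's English description precedes it below -/
import Mathlib

section
/- Let E be a real Hilbert space, f : E → ℝ a differentiable convex function with gradient ∇f, g : E → ℝ a convex function, and F = f + g. Let P* be a minimizer of F over E, let L_max > 0, and let (P^k)_{k≥0} be a sequence in E together with parameters η_k satisfying, for every k ≥ 1: (i) 0 < η_k ≤ L_max; (ii) P^k minimizes the model u ↦ f(P^{k−1}) + ⟨∇f(P^{k−1}), u − P^{k−1}⟩ + (η_k/2)‖u − P^{k−1}‖² + g(u) over E; (iii) F(P^k) ≤ f(P^{k−1}) + ⟨∇f(P^{k−1}), P^k − P^{k−1}⟩ + (η_k/2)‖P^k − P^{k−1}‖² + g(P^k). Then for every k ≥ 1: F(P^k) − F(P*) ≤ L_max · ‖P^0 − P*‖² / (2k). -/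
/-! The minimizer `x` of the `η`-strongly convex model `M = M_{y,η}` satisfies
`M x + η/2 ‖u - x‖² ≤ M u`. Together with the majorization `F x ≤ M x` and the gradient
inequality `M u ≤ F u + η/2 ‖u - y‖²` this gives
`F (P k) ≤ F u + η_k/2 (‖u - P (k-1)‖² - ‖u - P k‖²)`. For `u = P (k-1)` it shows that `F (P k)`
is nonincreasing; for `u = P*`, telescoping yields `k (F (P k) - F P*) ≤ L_max/2 ‖P 0 - P*‖²`. -/

open RealInnerProductSpace Filter Topology Set

section
variable {E : Type*} [NormedAddCommGroup E] [InnerProductSpace ℝ E]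

theorem ConvexOn.add_inner_le_of_hasGradientAt [CompleteSpace E] {f : E → ℝ}
    (hf : ConvexOn ℝ univ f) {y a : E} (h : HasGradientAt f a y) (u : E) :
    f y + ⟪a, u - y⟫ ≤ f u := by
  have hline : HasDerivAt (f ∘ AffineMap.lineMap (k := ℝ) y u) ⟪a, u - y⟫ 0 := by
    have hl : HasDerivAt (AffineMap.lineMap y u : ℝ → E) (u - y) 0 := AffineMap.hasDerivAt_lineMap
    have hf0 : HasFDerivAt f (InnerProductSpace.toDual ℝ E a)
        (AffineMap.lineMap y u (0 : ℝ)) := by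
      simpa using h.hasFDerivAt
    simpa using hf0.comp_hasDerivAt (0 : ℝ) hl
  have := (hf.comp_affineMap (AffineMap.lineMap y u)).le_slope_of_hasDerivAt (mem_univ 0)
    (mem_univ 1) one_pos hline
  simp only [slope_def_field, Function.comp_apply, AffineMap.lineMap_apply_one,
    AffineMap.lineMap_apply_zero, sub_zero, div_one] at this
  linarith

theorem ConvexOn.add_sq_norm_sub_le_of_forall_le {h : E → ℝ} (hh : ConvexOn ℝ univ h)
    {c : ℝ} {x y : E} (hx : ∀ v, h x + c / 2 * ‖x - y‖ ^ 2 ≤ h v + c / 2 * ‖v - y‖ ^ 2) (u : E) :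
    h x + c / 2 * ‖x - y‖ ^ 2 + c / 2 * ‖u - x‖ ^ 2 ≤ h u + c / 2 * ‖u - y‖ ^ 2 := by
  set A := h u - h x + c * ⟪x - y, u - x⟫
  have hA_add : ∀ t : ℝ, 0 < t → t ≤ 1 → 0 ≤ A + t * (c / 2 * ‖u - x‖ ^ 2) := by
    intro t ht0 ht1
    have hconv : h (x + t • (u - x)) ≤ (1 - t) * h x + t * h u := by
      have hpt : x + t • (u - x) = (1 - t) • x + t • u := by
        rw [smul_sub, sub_smul, one_smul]; abel
      simpa only [hpt, smul_eq_mul] using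
        hh.2 (mem_univ x) (mem_univ u) (sub_nonneg.2 ht1) ht0.le (by ring)
    have hsq : ‖x + t • (u - x) - y‖ ^ 2
        = ‖x - y‖ ^ 2 + 2 * t * ⟪x - y, u - x⟫ + t ^ 2 * ‖u - x‖ ^ 2 := by
      rw [add_sub_right_comm, norm_add_sq_real, real_inner_smul_right, norm_smul,
        Real.norm_eq_abs, mul_pow, sq_abs]
      ring
    have hopt := hx (x + t • (u - x))
    rw [hsq] at hopt
    have hprod : 0 ≤ t * (A + t * (c / 2 * ‖u - x‖ ^ 2)) := by nlinarith
    exact (mul_nonneg_iff_of_pos_left ht0).mp hprod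
  -- first-order optimality of `x`, obtained by letting `t → 0⁺`
  have hA : 0 ≤ A := by
    have hlim : Tendsto (fun t : ℝ => A + t * (c / 2 * ‖u - x‖ ^ 2)) (𝓝[>] 0) (𝓝 A) := by
      have : Continuous (fun t : ℝ => A + t * (c / 2 * ‖u - x‖ ^ 2)) := by fun_prop
      simpa using (this.tendsto 0).mono_left nhdsWithin_le_nhds
    refine ge_of_tendsto hlim ?_
    filter_upwards [Ioc_mem_nhdsGT (zero_lt_one' ℝ)] with t ht using hA_add t ht.1 ht.2
  have hsplit : ‖u - y‖ ^ 2 = ‖u - x‖ ^ 2 + 2 * ⟪x - y, u - x⟫ + ‖x - y‖ ^ 2 := by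
    rw [← sub_add_sub_cancel u x y, norm_add_sq_real, real_inner_comm]
  rw [hsplit]
  linarith

noncomputable def proxModel (f g : E → ℝ) (f' : E → E) (η : ℝ) (y u : E) : ℝ :=
  f y + ⟪f' y, u - y⟫ + η / 2 * ‖u - y‖ ^ 2 + g u

theorem le_add_sq_norm_sub_of_proxModel [CompleteSpace E] {f g : E → ℝ} {f' : E → E} {η : ℝ}
    {x y : E} (hf : ConvexOn ℝ univ f) (hgrad : HasGradientAt f (f' y) y)
    (hg : ConvexOn ℝ univ g) (hmin : ∀ u, proxModel f g f' η y x ≤ proxModel f g f' η y u)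
    (hmaj : f x + g x ≤ proxModel f g f' η y x) (u : E) :
    f x + g x ≤ f u + g u + η / 2 * (‖u - y‖ ^ 2 - ‖u - x‖ ^ 2) := by
  have hlin : ConvexOn ℝ univ fun v => f y + ⟪f' y, v - y⟫ + g v := by
    refine ConvexOn.add ?_ hg
    have haffine : (fun v : E => f y + ⟪f' y, v - y⟫)
        = ⇑(innerₛₗ ℝ (f' y)) + fun _ => f y - ⟪f' y, y⟫ := by
      ext v
      rw [Pi.add_apply, innerₛₗ_apply_apply, inner_sub_right]
      ring
    exact haffine ▸ ((innerₛₗ ℝ (f' y)).convexOn convex_univ).add_const _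
  have hgrowth := hlin.add_sq_norm_sub_le_of_forall_le (c := η) (x := x) (y := y)
    (fun v => by have := hmin v; unfold proxModel at this; linarith) u
  have hsupport := hf.add_inner_le_of_hasGradientAt hgrad u
  unfold proxModel at hmaj
  linarith

end

theorem nat_mul_le_sub_of_antitone {a d : ℕ → ℝ} (ha : Antitone a)
    (hstep : ∀ n, a (n + 1) ≤ d n - d (n + 1)) (n : ℕ) : n * a n ≤ d 0 - d n := by
  induction n with
  | zero => simp
  | succ n ih =>
    have := ha n.le_succ
    push_cast
    nlinarith [n.cast_nonneg (α := ℝ), hstep n]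

theorem stmt_1_general {E : Type*} [NormedAddCommGroup E] [InnerProductSpace ℝ E] [CompleteSpace E]
    (f g : E → ℝ) (f' : E → E)
    (hf : ConvexOn ℝ Set.univ f)
    (hdiff : ∀ x, HasGradientAt f (f' x) x)
    (hg : ConvexOn ℝ Set.univ g)
    (Pstar : E) (hPstar : ∀ x : E, f Pstar + g Pstar ≤ f x + g x)
    (Lmax : ℝ)
    (P : ℕ → E) (η : ℕ → ℝ)
    (hηpos : ∀ k : ℕ, 1 ≤ k → 0 < η k)
    (hηle : ∀ k : ℕ, 1 ≤ k → η k ≤ Lmax)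
    (hmin : ∀ k : ℕ, 1 ≤ k → ∀ u : E,
      f (P (k - 1)) + ⟪f' (P (k - 1)), P k - P (k - 1)⟫
        + η k / 2 * ‖P k - P (k - 1)‖ ^ 2 + g (P k) ≤
      f (P (k - 1)) + ⟪f' (P (k - 1)), u - P (k - 1)⟫
        + η k / 2 * ‖u - P (k - 1)‖ ^ 2 + g u)
    (hmaj : ∀ k : ℕ, 1 ≤ k →
      f (P k) + g (P k) ≤
      f (P (k - 1)) + ⟪f' (P (k - 1)), P k - P (k - 1)⟫
        + η k / 2 * ‖P k - P (k - 1)‖ ^ 2 + g (P k)) :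
    ∀ k : ℕ, 1 ≤ k →
      (f (P k) + g (P k)) - (f Pstar + g Pstar) ≤
        Lmax * ‖P 0 - Pstar‖ ^ 2 / (2 * k) := by
  have hdescent : ∀ n u, f (P (n + 1)) + g (P (n + 1)) ≤
      f u + g u + η (n + 1) / 2 * (‖u - P n‖ ^ 2 - ‖u - P (n + 1)‖ ^ 2) := fun n =>
    le_add_sq_norm_sub_of_proxModel hf (hdiff _) hg (hmin (n + 1) n.succ_pos)
      (hmaj (n + 1) n.succ_pos)
  have hanti : Antitone fun n => f (P n) + g (P n) - (f Pstar + g Pstar) := by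
    refine antitone_nat_of_succ_le fun n => ?_
    have := hdescent n (P n)
    rw [sub_self, norm_zero] at this
    nlinarith [hηpos (n + 1) n.succ_pos]
  have hstep : ∀ n, f (P (n + 1)) + g (P (n + 1)) - (f Pstar + g Pstar) ≤
      Lmax / 2 * ‖P n - Pstar‖ ^ 2 - Lmax / 2 * ‖P (n + 1) - Pstar‖ ^ 2 := by
    intro n
    have h := hdescent n Pstar
    rw [norm_sub_rev Pstar, norm_sub_rev Pstar] at h
    have hgap := hPstar (P (n + 1))
    have hpos := hηpos (n + 1) n.succ_pos
    have hle := hηle (n + 1) n.succ_pos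
    have hD : 0 ≤ ‖P n - Pstar‖ ^ 2 - ‖P (n + 1) - Pstar‖ ^ 2 := by nlinarith
    nlinarith [mul_le_mul_of_nonneg_right hle hD]
  intro k hk
  have hL : 0 ≤ Lmax := (hηpos k hk).le.trans (hηle k hk)
  have hk_pos : (0 : ℝ) < k := by exact_mod_cast hk
  have := nat_mul_le_sub_of_antitone hanti hstep k
  rw [le_div_iff₀ (by positivity)]
  nlinarith [mul_nonneg hL (sq_nonneg ‖P k - Pstar‖)]

/-- Theorem 4.1: O(1/k) convergence of ISTA with modified stepsize search. -/
theorem stmt_1 {E : Type*} [NormedAddCommGroup E] [InnerProductSpace ℝ E] [CompleteSpace E]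
    (f g : E → ℝ) (f' : E → E)
    (hf : ConvexOn ℝ Set.univ f)
    (hdiff : ∀ x, HasGradientAt f (f' x) x)
    (hg : ConvexOn ℝ Set.univ g)
    (Pstar : E) (hPstar : ∀ x : E, f Pstar + g Pstar ≤ f x + g x)
    (Lmax : ℝ) (hLmax : 0 < Lmax)
    (P : ℕ → E) (η : ℕ → ℝ)
    (hηpos : ∀ k : ℕ, 1 ≤ k → 0 < η k)
    (hηle : ∀ k : ℕ, 1 ≤ k → η k ≤ Lmax)
    (hmin : ∀ k : ℕ, 1 ≤ k → ∀ u : E,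
      f (P (k - 1)) + ⟪f' (P (k - 1)), P k - P (k - 1)⟫
        + η k / 2 * ‖P k - P (k - 1)‖ ^ 2 + g (P k) ≤
      f (P (k - 1)) + ⟪f' (P (k - 1)), u - P (k - 1)⟫
        + η k / 2 * ‖u - P (k - 1)‖ ^ 2 + g u)
    (hmaj : ∀ k : ℕ, 1 ≤ k →
      f (P k) + g (P k) ≤
      f (P (k - 1)) + ⟪f' (P (k - 1)), P k - P (k - 1)⟫
        + η k / 2 * ‖P k - P (k - 1)‖ ^ 2 + g (P k)) :
    ∀ k : ℕ, 1 ≤ k →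
      (f (P k) + g (P k)) - (f Pstar + g Pstar) ≤
        Lmax * ‖P 0 - Pstar‖ ^ 2 / (2 * k) :=
  stmt_1_general f g f' hf hdiff hg Pstar hPstar Lmax P η hηpos hηle hmin hmaj
end

section
/- Let E be a real Hilbert space, g : E → ℝ convex, and f : E → ℝ differentiable with gradient ∇f, σ-strongly convex and L-smooth with 0 < σ ≤ L; set F = f + g. Fix y ∈ E and let p ∈ E be a minimizer over E of u ↦ f(y) + ⟨∇f(y), u − y⟩ + g(u) + (L/2)‖u − y‖². Then for every x ∈ E: F(x) − F(p) ≥ (L/2)‖x − p‖² − (L/2)‖x − y‖² + (σ/2)‖x − y‖². -/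
/-!
Let `Q u = f y + ⟪∇f y, u - y⟫ + g u + (L/2)‖u - y‖²`. By `L`-smoothness `F p ≤ Q p`, and by
`σ`-strong convexity `F x ≥ Q x - (L/2)‖x - y‖² + (σ/2)‖x - y‖²`. Since `Q` is `L`-strongly
convex and `p` minimizes it, `Q x ≥ Q p + (L/2)‖x - p‖²`; the three inequalities add up to the claim.
-/

open RealInnerProductSpace Set Filter Topology

theorem ConvexOn.add_apply_sub_le_of_hasFDerivAt {E : Type*} [NormedAddCommGroup E]
    [NormedSpace ℝ E] {h : E → ℝ} {D : E →L[ℝ] ℝ} {x y : E}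
    (hc : ConvexOn ℝ univ h) (hd : HasFDerivAt h D y) : h y + D (x - y) ≤ h x := by
  let ℓ : ℝ →ᵃ[ℝ] E := AffineMap.lineMap y x
  have hℓ : HasDerivAt ℓ (x - y) 0 := by
    simpa [ℓ] using AffineMap.hasDerivAt_lineMap (a := y) (b := x) (x := (0 : ℝ))
  have hd' : HasFDerivAt h D (ℓ 0) := by simpa [ℓ] using hd
  have hslope := (hc.comp_affineMap ℓ).le_slope_of_hasDerivAt
    (mem_univ 0) (mem_univ 1) one_pos (hd'.comp_hasDerivAt 0 hℓ)
  simp only [ℓ, slope, Function.comp_apply, AffineMap.lineMap_apply_zero,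
    AffineMap.lineMap_apply_one, sub_zero, inv_one, one_smul, vsub_eq_sub] at hslope
  linarith

section InnerProductSpace

variable {E : Type*} [NormedAddCommGroup E] [InnerProductSpace ℝ E]

theorem StrongConvexOn.add_sq_le_of_isMinOn {s : Set E} {f : E → ℝ} {m : ℝ} {p x : E}
    (hf : StrongConvexOn s m f) (hp : IsMinOn f s p) (hps : p ∈ s) (hx : x ∈ s) :
    f p + m / 2 * ‖x - p‖ ^ 2 ≤ f x := by
  have hsegment : ∀ t ∈ Ioo (0 : ℝ) 1, f p + (1 - t) * (m / 2 * ‖x - p‖ ^ 2) ≤ f x := by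
    rintro t ⟨ht₀, ht₁⟩
    have hconv := hf.2 hx hps ht₀.le (sub_nonneg.2 ht₁.le) (add_sub_cancel t 1)
    have hmin : f p ≤ f (t • x + (1 - t) • p) :=
      hp (hf.1 hx hps ht₀.le (sub_nonneg.2 ht₁.le) (add_sub_cancel t 1))
    simp only [smul_eq_mul] at hconv
    refine le_of_mul_le_mul_left ?_ ht₀
    linarith
  have hlim : Tendsto (fun t : ℝ => f p + (1 - t) * (m / 2 * ‖x - p‖ ^ 2)) (𝓝[>] 0)
      (𝓝 (f p + (1 - 0) * (m / 2 * ‖x - p‖ ^ 2))) :=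
    ((continuous_const.add ((continuous_const.sub continuous_id).mul continuous_const)).tendsto
      0).mono_left nhdsWithin_le_nhds
  simpa using le_of_tendsto hlim (eventually_of_mem (Ioo_mem_nhdsGT one_pos) hsegment)

theorem strongConvexOn_inner_sub_add_add_norm_sub_sq {g : E → ℝ} (hg : ConvexOn ℝ univ g)
    (v y : E) (m : ℝ) :
    StrongConvexOn univ m fun u => ⟪v, u - y⟫ + g u + m / 2 * ‖u - y‖ ^ 2 := by
  refine strongConvexOn_iff_convex.2 <|
    ((hg.add ((innerSL ℝ (v - m • y)).toLinearMap.convexOn convex_univ)).add_const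
      (m / 2 * ‖y‖ ^ 2 - ⟪v, y⟫)).congr fun u _ => ?_
  simp only [map_sub, map_smul, ContinuousLinearMap.toLinearMap_sub,
    ContinuousLinearMap.toLinearMap_innerSL_apply, ContinuousLinearMap.toLinearMap_smul,
    Pi.add_apply, LinearMap.sub_apply, innerₛₗ_apply_apply, LinearMap.smul_apply, smul_eq_mul,
    inner_sub_right, norm_sub_sq_real, real_inner_comm]
  ring

variable [CompleteSpace E]

theorem StrongConvexOn.add_inner_sub_add_sq_le {f : E → ℝ} {m : ℝ} {v y : E}
    (hf : StrongConvexOn univ m f) (hd : HasGradientAt f v y) (x : E) :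
    f y + ⟪v, x - y⟫ + m / 2 * ‖x - y‖ ^ 2 ≤ f x := by
  have hD := hd.hasFDerivAt.sub ((hasStrictFDerivAt_norm_sq y).hasFDerivAt.const_mul (m / 2))
  have htangent := (strongConvexOn_iff_convex.1 hf).add_apply_sub_le_of_hasFDerivAt (x := x) hD
  have hexpand : ‖x‖ ^ 2 = ‖y‖ ^ 2 + 2 * ⟪y, x - y⟫ + ‖x - y‖ ^ 2 := by
    simpa using norm_add_sq_real y (x - y)
  simp only [sub_apply, InnerProductSpace.toDual_apply_apply, smul_apply, coe_innerSL_apply,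
    nsmul_eq_mul, Nat.cast_ofNat, smul_eq_mul, hexpand] at htangent
  linarith

theorem le_add_inner_sub_add_sq_of_convexOn {f : E → ℝ} {L : ℝ} {v y : E}
    (hf : ConvexOn ℝ univ fun x => L / 2 * ‖x‖ ^ 2 - f x) (hd : HasGradientAt f v y) (x : E) :
    f x ≤ f y + ⟪v, x - y⟫ + L / 2 * ‖x - y‖ ^ 2 := by
  have hneg : StrongConvexOn univ (-L) (-f) :=
    strongConvexOn_iff_convex.2 (hf.congr fun u _ => by simp only [Pi.neg_apply]; ring)
  have hd' : HasGradientAt (-f) (-v) y := by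
    simpa [hasGradientAt_iff_hasFDerivAt] using hd.hasFDerivAt.neg
  have := hneg.add_inner_sub_add_sq_le hd' x
  simp only [Pi.neg_apply, inner_neg_left] at this
  linarith

end InnerProductSpace

theorem stmt_5_general {E : Type*} [NormedAddCommGroup E] [InnerProductSpace ℝ E] [CompleteSpace E]
    (f g : E → ℝ) (f' : E → E) (σ L : ℝ)
    (hg : ConvexOn ℝ Set.univ g)
    (hdiff : ∀ x, HasGradientAt f (f' x) x)
    (hsc : ConvexOn ℝ Set.univ (fun x => f x - σ / 2 * ‖x‖ ^ 2))
    (hsm : ConvexOn ℝ Set.univ (fun x => L / 2 * ‖x‖ ^ 2 - f x))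
    (y p : E)
    (hmin : ∀ u : E,
      f y + ⟪f' y, p - y⟫ + g p + L / 2 * ‖p - y‖ ^ 2 ≤
      f y + ⟪f' y, u - y⟫ + g u + L / 2 * ‖u - y‖ ^ 2) :
    ∀ x : E, (f x + g x) - (f p + g p) ≥
      L / 2 * ‖x - p‖ ^ 2 - L / 2 * ‖x - y‖ ^ 2 + σ / 2 * ‖x - y‖ ^ 2 := by
  intro x
  have hlower := (strongConvexOn_iff_convex.2 hsc).add_inner_sub_add_sq_le (hdiff y) x
  have hupper := le_add_inner_sub_add_sq_of_convexOn hsm (hdiff y) p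
  have hgrowth := (strongConvexOn_inner_sub_add_add_norm_sub_sq hg (f' y) y L).add_sq_le_of_isMinOn
    (isMinOn_univ_iff.2 fun u => by linarith [hmin u]) (mem_univ p) (mem_univ x)
  linarith

/-- Eq. (4.14): the proximal inequality with stepsize 1/L under σ-strong convexity
and L-smoothness. -/
theorem stmt_5 {E : Type*} [NormedAddCommGroup E] [InnerProductSpace ℝ E] [CompleteSpace E]
    (f g : E → ℝ) (f' : E → E) (σ L : ℝ)
    (hσ : 0 < σ) (hσL : σ ≤ L)
    (hg : ConvexOn ℝ Set.univ g)
    (hdiff : ∀ x, HasGradientAt f (f' x) x)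
    (hsc : ConvexOn ℝ Set.univ (fun x => f x - σ / 2 * ‖x‖ ^ 2))
    (hsm : ConvexOn ℝ Set.univ (fun x => L / 2 * ‖x‖ ^ 2 - f x))
    (y p : E)
    (hmin : ∀ u : E,
      f y + ⟪f' y, p - y⟫ + g p + L / 2 * ‖p - y‖ ^ 2 ≤
      f y + ⟪f' y, u - y⟫ + g u + L / 2 * ‖u - y‖ ^ 2) :
    ∀ x : E, (f x + g x) - (f p + g p) ≥
      L / 2 * ‖x - p‖ ^ 2 - L / 2 * ‖x - y‖ ^ 2 + σ / 2 * ‖x - y‖ ^ 2 :=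
  stmt_5_general f g f' σ L hg hdiff hsc hsm y p hmin
end
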